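/- Let G be a graph with burning sequence S_G = (v_1, ..., v_n) of a burning (lambda, S_G). Then there exist disjoint subtrees T_1, ..., T_n of G whose vertex sets partition V(G), such that S_G is a burning sequence for a burning of the disjoint union H = T_1 + ... + T_n, and the corresponding burning map lambda_H is a homomorphism (|lambda_H(v) - lambda_H(w)| = 1 for all adjacent v, w in H). -/

import Mathlib

open SimpleGraph

/-- The `j`-th burned set `𝒩_j`: vertices within distance `j - k` of source `v_k` (`1 ≤ k ≤ j`). -/
def burnN {V : Type*} (G : SimpleGraph V) (s : ℕ → V) (n j : ℕ) : Set V :=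
  {w | ∃ k, 1 ≤ k ∧ k ≤ n ∧ k ≤ j ∧ G.Reachable (s k) w ∧ G.dist (s k) w ≤ j - k}

/-- The set `U_j`: vertices within distance `j - k` of source `v_k` for `1 ≤ k ≤ j - 1`. -/
def burnU {V : Type*} (G : SimpleGraph V) (s : ℕ → V) (n j : ℕ) : Set V :=
  {w | ∃ k, 1 ≤ k ∧ k ≤ n ∧ k + 1 ≤ j ∧ G.Reachable (s k) w ∧ G.dist (s k) w ≤ j - k}

/-- `(s 1, …, s n)` is a burning sequence: `v_j ∉ U_j` for `2 ≤ j ≤ n`, and `U_{n+1} = G`. -/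
def IsBurningSeq {V : Type*} (G : SimpleGraph V) (s : ℕ → V) (n : ℕ) : Prop :=
  1 ≤ n ∧ (∀ j, 2 ≤ j → j ≤ n → s j ∉ burnU G s n j) ∧ ∀ w, w ∈ burnU G s n (n + 1)

/-- The burning map `λ(w) = min { j | w ∈ 𝒩_j }`. -/
noncomputable def burnTime {V : Type*} (G : SimpleGraph V) (s : ℕ → V) (n : ℕ) (w : V) : ℕ :=
  sInf {j | w ∈ burnN G s n j}

/-- The end time `𝐓 = max_w λ(w)` of the burning. -/
noncomputable def endTime {V : Type*} [Fintype V] (G : SimpleGraph V) (s : ℕ → V) (n : ℕ) : ℕ :=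
  Finset.univ.sup (burnTime G s n)

/-- A burning whose burning map is a homomorphism: `|λ(v) - λ(w)| = 1` on every edge. -/
def IsBurningHom {V : Type*} (G : SimpleGraph V) (s : ℕ → V) (n : ℕ) : Prop :=
  IsBurningSeq G s n ∧
    ∀ v w, G.Adj v w →
      ((burnTime G s n v : ℤ) - burnTime G s n w).natAbs = 1

/-!
Every vertex `w` other than a source has a neighbour burned one step earlier: the penultimate
vertex of a shortest path from the source that burns `w`. Making it the parent of `w`, with the
sources as roots, yields a forest `H ≤ G` whose trees are the descendants of the sources.
Following parents from `w` reaches its source `v_k` in at most `λ(w) - k` steps, so `H` burns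
exactly as `G` does, and every edge of `H` joins a vertex to its parent, burned one step
earlier. `H` has no cycle, since the two neighbours on a cycle of a vertex of maximal burning
time would both be its parent.
-/

namespace SimpleGraph

variable {V : Type*}

def parentGraph (f : V → V) : SimpleGraph V :=
  fromRel fun a b => f a = b

section parentGraph

variable {f : V → V}

theorem parentGraph_adj {a b : V} : (parentGraph f).Adj a b ↔ a ≠ b ∧ (f a = b ∨ f b = a) :=
  fromRel_adj _ _ _

theorem parentGraph_adj_apply {w : V} (h : f w ≠ w) : (parentGraph f).Adj (f w) w :=
  parentGraph_adj.2 ⟨h, Or.inr rfl⟩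

theorem parentGraph_le {G : SimpleGraph V} (h : ∀ w, f w ≠ w → G.Adj (f w) w) :
    parentGraph f ≤ G := by
  intro a b hab
  obtain ⟨hne, rfl | rfl⟩ := parentGraph_adj.1 hab
  · exact (h a hne.symm).symm
  · exact h b hne

theorem natAbs_sub_eq_one_of_parentGraph_adj {r : V → ℕ}
    (hr : ∀ w, f w ≠ w → r (f w) + 1 = r w) {a b : V} (hab : (parentGraph f).Adj a b) :
    ((r a : ℤ) - r b).natAbs = 1 := by
  obtain ⟨hne, rfl | rfl⟩ := parentGraph_adj.1 hab
  · have := hr a hne.symm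
    omega
  · have := hr b hne
    omega

theorem Reachable.apply_eq_of_parentGraph {β : Type*} {g : V → β} (hg : ∀ w, g (f w) = g w)
    {a b : V} (h : (parentGraph f).Reachable a b) : g a = g b := by
  obtain ⟨p⟩ := h
  induction p with
  | nil => rfl
  | cons hadj _ ih =>
    refine Eq.trans ?_ ih
    obtain ⟨-, rfl | rfl⟩ := parentGraph_adj.1 hadj
    exacts [(hg _).symm, hg _]

theorem isFixedPt_iterate_of_rank_le {r : V → ℕ} (hr : ∀ w, f w ≠ w → r (f w) < r w) :
    ∀ {m : ℕ} {w : V}, r w ≤ m → Function.IsFixedPt f (f^[m] w)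
  | 0, w, hw => by
    by_contra h
    have := hr w h
    omega
  | m + 1, w, hw => by
    by_cases h : f w = w
    · rw [Function.iterate_fixed h]
      exact h
    · rw [Function.iterate_succ_apply]
      exact isFixedPt_iterate_of_rank_le hr (by have := hr w h; omega)

theorem exists_walk_iterate_parentGraph {r : V → ℕ} (hr : ∀ w, f w ≠ w → r (f w) < r w) :
    ∀ (m : ℕ) (w : V), ∃ p : (parentGraph f).Walk (f^[m] w) w, p.length + r (f^[m] w) ≤ r w
  | 0, w => ⟨.nil, by simp⟩
  | m + 1, w => by
    by_cases h : f w = w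
    · rw [Function.iterate_fixed h]
      exact ⟨.nil, by simp⟩
    · obtain ⟨p, hp⟩ := exists_walk_iterate_parentGraph hr m (f w)
      rw [Function.iterate_succ_apply]
      refine ⟨p.concat (parentGraph_adj_apply h), ?_⟩
      have := hr w h
      rw [Walk.length_concat]
      omega

theorem isAcyclic_parentGraph {α : Type*} [LinearOrder α] {r : V → α}
    (hr : ∀ w, f w ≠ w → r (f w) < r w) : (parentGraph f).IsAcyclic := by
  classical
  intro v c hc
  obtain ⟨u, hu, hmax⟩ :=
    c.support.toFinset.exists_max_image r ⟨v, List.mem_toFinset.2 c.start_mem_support⟩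
  have hnbr : c.toSubgraph.neighborSet u ⊆ {f u} := by
    intro x hx
    have hxc : x ∈ c.support := c.mem_verts_toSubgraph.1 (c.toSubgraph.edge_vert hx.symm)
    obtain ⟨hne, hux | hxu⟩ := parentGraph_adj.1 (c.toSubgraph.adj_sub hx)
    · exact hux.symm
    · have := hr x (hxu ▸ hne)
      rw [hxu] at this
      exact absurd (hmax x (List.mem_toFinset.2 hxc)) (not_le.2 this)
  have htwo := hc.ncard_neighborSet_toSubgraph_eq_two (List.mem_toFinset.1 hu)
  have := Set.ncard_le_ncard hnbr
  rw [htwo, Set.ncard_singleton] at this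
  omega

end parentGraph

end SimpleGraph

section Burning

open SimpleGraph

variable {V : Type*} {G H : SimpleGraph V} {s : ℕ → V} {n : ℕ}

theorem burnTime_le_add_dist {k : ℕ} {w : V} (hk1 : 1 ≤ k) (hkn : k ≤ n)
    (hr : G.Reachable (s k) w) : burnTime G s n w ≤ k + G.dist (s k) w :=
  Nat.sInf_le ⟨k, hk1, hkn, Nat.le_add_right _ _, hr, by omega⟩

theorem exists_burnTime_eq (hS : IsBurningSeq G s n) (w : V) :
    ∃ k, 1 ≤ k ∧ k ≤ n ∧ G.Reachable (s k) w ∧ k + G.dist (s k) w = burnTime G s n w := by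
  obtain ⟨k, hk1, hkn, -, hr, hd⟩ := hS.2.2 w
  obtain ⟨j, hj1, hjn, hjt, hrj, hdj⟩ :=
    Nat.sInf_mem (s := {j | w ∈ burnN G s n j}) ⟨n + 1, k, hk1, hkn, by omega, hr, hd⟩
  have := burnTime_le_add_dist hj1 hjn hrj
  exact ⟨j, hj1, hjn, hrj, by unfold burnTime at this ⊢; omega⟩

theorem burnTime_le_succ (hS : IsBurningSeq G s n) (w : V) : burnTime G s n w ≤ n + 1 := by
  obtain ⟨k, hk1, hkn, -, hr, hd⟩ := hS.2.2 w
  have := burnTime_le_add_dist hk1 hkn hr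
  omega

theorem burnTime_source (hS : IsBurningSeq G s n) {k : ℕ} (hk1 : 1 ≤ k) (hkn : k ≤ n) :
    burnTime G s n (s k) = k := by
  have hle := burnTime_le_add_dist hk1 hkn (Reachable.refl (G := G) (s k))
  rw [dist_self, add_zero] at hle
  obtain ⟨j, hj1, hjn, hr, hj⟩ := exists_burnTime_eq hS (s k)
  by_contra hne
  exact hS.2.1 k (by omega) hkn ⟨j, hj1, hjn, by omega, hr, by omega⟩

theorem burnTime_le_of_adj (hS : IsBurningSeq G s n) {v w : V} (h : G.Adj v w) :
    burnTime G s n w ≤ burnTime G s n v + 1 := by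
  obtain ⟨k, hk1, hkn, hr, hk⟩ := exists_burnTime_eq hS v
  have := burnTime_le_add_dist hk1 hkn (hr.trans h.reachable)
  have := h.reachable.dist_triangle_right (s k)
  rw [dist_eq_one_iff_adj.2 h] at this
  omega

theorem exists_adj_burnTime_add_one (hS : IsBurningSeq G s n) {w : V}
    (hw : ¬∃ k, 1 ≤ k ∧ k ≤ n ∧ s k = w) :
    ∃ v, G.Adj v w ∧ burnTime G s n v + 1 = burnTime G s n w := by
  obtain ⟨k, hk1, hkn, hr, hk⟩ := exists_burnTime_eq hS w
  obtain ⟨p, hp⟩ := hr.exists_walk_length_eq_dist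
  have hnil : ¬p.Nil := fun h => hw ⟨k, hk1, hkn, h.eq⟩
  have hadj := p.adj_penultimate hnil
  have hdrop := p.length_dropLast_add_one hnil
  have := burnTime_le_add_dist hk1 hkn ⟨p.dropLast⟩
  have := dist_le p.dropLast
  have := burnTime_le_of_adj hS hadj
  exact ⟨_, hadj, by omega⟩

theorem burnU_mono (hHG : H ≤ G) (j : ℕ) : burnU H s n j ⊆ burnU G s n j := by
  rintro w ⟨k, hk1, hkn, hkj, hr, hd⟩
  exact ⟨k, hk1, hkn, hkj, hr.mono hHG, (hr.dist_anti hHG).trans hd⟩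

theorem burnTime_le_of_le (hHG : H ≤ G) (hH : IsBurningSeq H s n) (w : V) :
    burnTime G s n w ≤ burnTime H s n w := by
  obtain ⟨k, hk1, hkn, hr, hk⟩ := exists_burnTime_eq hH w
  have := burnTime_le_add_dist hk1 hkn (hr.mono hHG)
  have := hr.dist_anti hHG
  omega

open Classical in
/-- The final `else` branch is never taken for a burning sequence
(`exists_adj_burnTime_add_one`). -/
noncomputable def burnParent (G : SimpleGraph V) (s : ℕ → V) (n : ℕ) (w : V) : V :=
  if ∃ k, 1 ≤ k ∧ k ≤ n ∧ s k = w then w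
  else if h : ∃ v, G.Adj v w ∧ burnTime G s n v + 1 = burnTime G s n w then h.choose else w

theorem burnParent_spec {w : V} (hw : burnParent G s n w ≠ w) :
    G.Adj (burnParent G s n w) w ∧
      burnTime G s n (burnParent G s n w) + 1 = burnTime G s n w := by
  unfold burnParent at hw ⊢
  split_ifs at hw ⊢ with hsrc hpar
  · exact absurd rfl hw
  · exact hpar.choose_spec
  · exact absurd rfl hw

theorem burnTime_burnParent_lt {w : V} (hw : burnParent G s n w ≠ w) :
    burnTime G s n (burnParent G s n w) < burnTime G s n w := by
  have := (burnParent_spec hw).2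
  omega

theorem burnParent_source {k : ℕ} (hk1 : 1 ≤ k) (hkn : k ≤ n) :
    burnParent G s n (s k) = s k :=
  if_pos ⟨k, hk1, hkn, rfl⟩

theorem exists_source_of_burnParent_eq (hS : IsBurningSeq G s n) {w : V}
    (hw : burnParent G s n w = w) : ∃ k, 1 ≤ k ∧ k ≤ n ∧ s k = w := by
  by_contra hsrc
  have hpar := exists_adj_burnTime_add_one hS hsrc
  rw [burnParent, if_neg hsrc, dif_pos hpar] at hw
  exact hpar.choose_spec.1.ne hw

noncomputable def burnForest (G : SimpleGraph V) (s : ℕ → V) (n : ℕ) : SimpleGraph V :=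
  parentGraph (burnParent G s n)

noncomputable def burnRoot (G : SimpleGraph V) (s : ℕ → V) (n : ℕ) (w : V) : V :=
  (burnParent G s n)^[n + 1] w

noncomputable def burnRootIndex (G : SimpleGraph V) (s : ℕ → V) (n : ℕ) (w : V) : ℕ :=
  burnTime G s n (burnRoot G s n w)

theorem burnForest_le : burnForest G s n ≤ G :=
  parentGraph_le fun _ hw => (burnParent_spec hw).1

theorem isAcyclic_burnForest : (burnForest G s n).IsAcyclic :=
  isAcyclic_parentGraph fun _ => burnTime_burnParent_lt

theorem isFixedPt_burnRoot (hS : IsBurningSeq G s n) (w : V) :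
    Function.IsFixedPt (burnParent G s n) (burnRoot G s n w) :=
  isFixedPt_iterate_of_rank_le (fun _ => burnTime_burnParent_lt) (burnTime_le_succ hS w)

theorem burnRootIndex_spec (hS : IsBurningSeq G s n) (w : V) :
    1 ≤ burnRootIndex G s n w ∧ burnRootIndex G s n w ≤ n ∧
      s (burnRootIndex G s n w) = burnRoot G s n w := by
  obtain ⟨k, hk1, hkn, hk⟩ := exists_source_of_burnParent_eq hS (isFixedPt_burnRoot hS w)
  rw [burnRootIndex, ← hk, burnTime_source hS hk1 hkn]
  exact ⟨hk1, hkn, rfl⟩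

theorem burnRootIndex_burnParent (hS : IsBurningSeq G s n) (w : V) :
    burnRootIndex G s n (burnParent G s n w) = burnRootIndex G s n w := by
  have hroot : burnRoot G s n (burnParent G s n w) = burnRoot G s n w := by
    rw [burnRoot, ← Function.iterate_succ_apply, Function.iterate_succ_apply']
    exact isFixedPt_burnRoot hS w
  rw [burnRootIndex, hroot, burnRootIndex]

theorem burnRootIndex_source (hS : IsBurningSeq G s n) {k : ℕ} (hk1 : 1 ≤ k) (hkn : k ≤ n) :
    burnRootIndex G s n (s k) = k := by
  rw [burnRootIndex, burnRoot, Function.iterate_fixed (burnParent_source hk1 hkn),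
    burnTime_source hS hk1 hkn]

theorem exists_walk_burnRoot (w : V) :
    ∃ p : (burnForest G s n).Walk (burnRoot G s n w) w,
      p.length + burnRootIndex G s n w ≤ burnTime G s n w :=
  exists_walk_iterate_parentGraph (fun _ => burnTime_burnParent_lt) (n + 1) w

theorem exists_source_burnForest (hS : IsBurningSeq G s n) (w : V) :
    ∃ k, 1 ≤ k ∧ k ≤ n ∧ burnRootIndex G s n w = k ∧ (burnForest G s n).Reachable (s k) w ∧
      k + (burnForest G s n).dist (s k) w ≤ burnTime G s n w := by
  obtain ⟨hk1, hkn, hk⟩ := burnRootIndex_spec hS w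
  obtain ⟨p, hp⟩ := exists_walk_burnRoot (G := G) (s := s) (n := n) w
  have := dist_le p
  refine ⟨_, hk1, hkn, rfl, hk ▸ p.reachable, ?_⟩
  rw [hk]
  omega

theorem isBurningSeq_burnForest (hS : IsBurningSeq G s n) :
    IsBurningSeq (burnForest G s n) s n := by
  refine ⟨hS.1, fun j hj2 hjn hj => hS.2.1 j hj2 hjn (burnU_mono burnForest_le j hj), fun w => ?_⟩
  obtain ⟨k, hk1, hkn, -, hr, hd⟩ := exists_source_burnForest hS w
  have := burnTime_le_succ hS w
  exact ⟨k, hk1, hkn, by omega, hr, by omega⟩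

theorem burnTime_burnForest (hS : IsBurningSeq G s n) (w : V) :
    burnTime (burnForest G s n) s n w = burnTime G s n w := by
  obtain ⟨k, hk1, hkn, -, hr, hd⟩ := exists_source_burnForest hS w
  have := burnTime_le_add_dist hk1 hkn hr
  have := burnTime_le_of_le burnForest_le (isBurningSeq_burnForest hS) w
  omega

theorem burnRootIndex_eq_iff_reachable (hS : IsBurningSeq G s n) {k : ℕ} (hk1 : 1 ≤ k)
    (hkn : k ≤ n) (w : V) :
    burnRootIndex G s n w = k ↔ (burnForest G s n).Reachable (s k) w := by
  constructor
  · rintro rfl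
    obtain ⟨k, -, -, rfl, hr, -⟩ := exists_source_burnForest hS w
    exact hr
  · intro hr
    rw [← hr.apply_eq_of_parentGraph (burnRootIndex_burnParent hS),
      burnRootIndex_source hS hk1 hkn]

theorem isTree_induce_burnRootIndex (hS : IsBurningSeq G s n) {k : ℕ} (hk1 : 1 ≤ k)
    (hkn : k ≤ n) : ((burnForest G s n).induce {w | burnRootIndex G s n w = k}).IsTree := by
  have hcomp : {w | burnRootIndex G s n w = k} =
      ((burnForest G s n).connectedComponentMk (s k)).supp := by
    ext w
    rw [Set.mem_ofPred_eq, burnRootIndex_eq_iff_reachable hS hk1 hkn,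
      ConnectedComponent.mem_supp_iff, ConnectedComponent.eq, reachable_comm]
  rw [hcomp]
  exact ⟨(ConnectedComponent.maximal_connected_induce_supp _).1, isAcyclic_burnForest.induce _⟩

end Burning

theorem stmt8_general {V : Type*} (G : SimpleGraph V) (s : ℕ → V) (n : ℕ)
    (hS : IsBurningSeq G s n) :
    ∃ (H : SimpleGraph V) (c : V → ℕ),
      H ≤ G ∧
      (∀ v, 1 ≤ c v ∧ c v ≤ n) ∧
      (∀ v w, H.Adj v w → c v = c w) ∧
      (∀ k, 1 ≤ k → k ≤ n → (H.induce {v | c v = k}).IsTree) ∧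
      IsBurningSeq H s n ∧
      (∀ v w, H.Adj v w →
        ((burnTime H s n v : ℤ) - burnTime H s n w).natAbs = 1) := by
  refine ⟨burnForest G s n, burnRootIndex G s n, burnForest_le,
    fun v => ⟨(burnRootIndex_spec hS v).1, (burnRootIndex_spec hS v).2.1⟩,
    fun v w h => h.reachable.apply_eq_of_parentGraph (burnRootIndex_burnParent hS),
    fun k => isTree_induce_burnRootIndex hS, isBurningSeq_burnForest hS, fun v w h => ?_⟩
  rw [burnTime_burnForest hS, burnTime_burnForest hS]
  exact natAbs_sub_eq_one_of_parentGraph_adj (fun _ hw => (burnParent_spec hw).2) h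

/-- Corollary: there are disjoint subtrees `T_1, …, T_n` of `G` whose vertex sets partition
`V(G)` such that `S_G` is a burning sequence of the disjoint union `H = T_1 + ⋯ + T_n`
and the corresponding burning map is a homomorphism. -/
theorem stmt8 {V : Type*} [Fintype V] (G : SimpleGraph V) (s : ℕ → V) (n : ℕ)
    (hS : IsBurningSeq G s n) :
    ∃ (H : SimpleGraph V) (c : V → ℕ),
      H ≤ G ∧
      (∀ v, 1 ≤ c v ∧ c v ≤ n) ∧
      (∀ v w, H.Adj v w → c v = c w) ∧
      (∀ k, 1 ≤ k → k ≤ n → (H.induce {v | c v = k}).IsTree) ∧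
      IsBurningSeq H s n ∧
      (∀ v w, H.Adj v w →
        ((burnTime H s n v : ℤ) - burnTime H s n w).natAbs = 1) :=
  stmt8_general G s n hS
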